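/- For every N ∈ ℕ with Zeckendorf representation N = ∑_{j=1}^m F_{n_j} and every 1 ≤ j ≤ m, the quantity p_j = ∑_{s=j+1}^m (−φ)^{n_s − n_j} lies in the interval [−φ², φ]. -/

import Mathlib

/-!
Splitting off the first summand gives the recursion `p_j = (-φ)^d (1 + p_{j+1})` with
`d = n_{j+1} - n_j ≥ 2`, and `p_m = 0`. Since `φ (1 + φ) = 1`, the factor `1 + p_{j+1}` lies in
`[φ, 1 + φ]`, so `|p_j| ≤ φ^(d-1)`; this is at most `φ` for even `d` (where `p_j ≥ 0`) and at
most `φ²` for odd `d ≥ 3` (where `p_j ≤ 0`).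
-/

open Real Finset

/-- The fractional part of the golden ratio. -/
noncomputable def goldenφ : ℝ := (Real.sqrt 5 - 1) / 2

lemma goldenφ_mul_one_add : goldenφ * (1 + goldenφ) = 1 := by
  unfold goldenφ
  linear_combination Real.sq_sqrt (show (0 : ℝ) ≤ 5 by norm_num) / 4

lemma goldenφ_pos : 0 < goldenφ := by
  unfold goldenφ
  have : 1 < √5 := Real.lt_sqrt_of_sq_lt (by norm_num)
  linarith

lemma goldenφ_lt_one : goldenφ < 1 := by
  nlinarith [goldenφ_mul_one_add, goldenφ_pos]

lemma neg_goldenφ_pow_mul_one_add_mem_Icc {d : ℕ} (hd : 2 ≤ d) {T : ℝ}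
    (hT : T ∈ Set.Icc (-goldenφ ^ 2) goldenφ) :
    (-goldenφ) ^ d * (1 + T) ∈ Set.Icc (-goldenφ ^ 2) goldenφ := by
  obtain ⟨hT_lo, hT_hi⟩ := hT
  have hφ0 := goldenφ_pos
  have hφ1 := goldenφ_lt_one
  have hT1 : 0 ≤ 1 + T := by nlinarith
  have hy0 : 0 ≤ goldenφ ^ d * (1 + T) := by positivity
  have hy1 : goldenφ ^ d * (1 + T) ≤ goldenφ ^ (d - 1) := calc
    goldenφ ^ d * (1 + T) ≤ goldenφ ^ d * (1 + goldenφ) := by gcongr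
    _ = goldenφ ^ (d - 1) := by
      rw [← Nat.sub_add_cancel (by omega : 1 ≤ d), pow_succ, mul_assoc, goldenφ_mul_one_add,
        mul_one, Nat.add_sub_cancel]
  rcases Nat.even_or_odd d with hev | hodd
  · have : goldenφ ^ (d - 1) ≤ goldenφ := pow_le_of_le_one hφ0.le hφ1.le (by omega)
    rw [hev.neg_pow]
    constructor <;> nlinarith
  · have hd3 : 2 ≤ d - 1 := by obtain ⟨c, rfl⟩ := hodd; omega
    have : goldenφ ^ (d - 1) ≤ goldenφ ^ 2 := pow_le_pow_of_le_one hφ0.le hφ1.le hd3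
    rw [hodd.neg_pow]
    constructor <;> linarith

lemma sum_Icc_pow_sub_eq_pow_mul_one_add {R : Type*} [CommSemiring R] (x : R) (n : ℕ → ℕ)
    {j m : ℕ} (hjm : j + 1 ≤ m) (hj : n j ≤ n (j + 1))
    (hmono : ∀ s ∈ Icc (j + 2) m, n (j + 1) ≤ n s) :
    ∑ s ∈ Icc (j + 1) m, x ^ (n s - n j) =
      x ^ (n (j + 1) - n j) * (1 + ∑ s ∈ Icc (j + 2) m, x ^ (n s - n (j + 1))) := by
  have hsplit : Icc (j + 1) m = insert (j + 1) (Icc (j + 2) m) := by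
    ext s
    simp only [mem_Icc, mem_insert]
    omega
  rw [hsplit, sum_insert (by simp), mul_add, mul_one, mul_sum]
  congr 1
  refine sum_congr rfl fun s hs ↦ ?_
  rw [← pow_add]
  have := hmono s hs
  congr 1
  omega

lemma monotoneOn_Icc_of_add_two_le {m : ℕ} {n : ℕ → ℕ}
    (hgap : ∀ j, 1 ≤ j → j ≤ m - 1 → n j + 2 ≤ n (j + 1)) : MonotoneOn n (Set.Icc 1 m) :=
  monotoneOn_of_le_succ Set.ordConnected_Icc fun a _ ha hsa ↦ by
    simp only [Order.succ_eq_add_one, Set.mem_Icc] at ha hsa ⊢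
    have := hgap a ha.1 (by omega)
    omega

theorem pj_mem_Icc
    (m : ℕ) (n : ℕ → ℕ)
    (hgap : ∀ j, 1 ≤ j → j ≤ m - 1 → n j + 2 ≤ n (j + 1))
    (j : ℕ) (hj1 : 1 ≤ j) :
    (∑ s ∈ Finset.Icc (j + 1) m, (-goldenφ) ^ (n s - n j)) ∈
      Set.Icc (-goldenφ ^ 2) goldenφ := by
  rcases le_or_gt m j with hmj | hjm
  · rw [Icc_eq_empty (by omega), sum_empty]
    exact ⟨by simp [sq_nonneg], goldenφ_pos.le⟩
  · have hstep := hgap j hj1 (by omega)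
    have hmono : ∀ s ∈ Icc (j + 2) m, n (j + 1) ≤ n s := fun s hs ↦ by
      rw [mem_Icc] at hs
      exact monotoneOn_Icc_of_add_two_le hgap ⟨by omega, by omega⟩ ⟨by omega, hs.2⟩ (by omega)
    rw [sum_Icc_pow_sub_eq_pow_mul_one_add _ n hjm (by omega) hmono]
    exact neg_goldenφ_pow_mul_one_add_mem_Icc (by omega) (pj_mem_Icc m n hgap (j + 1) (by omega))
termination_by m - j
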